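/- For every input sequence σ, the cost of Harmonic Match with parameter K is at most the cost of Harmonic with parameter K+1, i.e., HM_K(σ) ≤ HA_{K+1}(σ). -/

import Mathlib

/-- One step of Next Fit: state is (number of bins opened so far, level of the open bin). -/
noncomputable def nfStep (s : ℕ × ℝ) (x : ℝ) : ℕ × ℝ :=
  if s.2 + x ≤ 1 then (s.1, s.2 + x) else (s.1 + 1, x)

/-- The number of bins Next Fit uses on the sequence `l`. -/
noncomputable def nfCost (l : List ℝ) : ℕ := (l.foldl nfStep (0, 2)).1

/-- Membership of an item `x` in class `i` (for `1 ≤ i ≤ K`) of the Harmonic-K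
algorithm: class `i < K` is `(1/(i+1), 1/i]` and class `K` is `(0, 1/K]`. -/
noncomputable def haMem (K i : ℕ) (x : ℝ) : Bool :=
  if i < K then decide (1 / ((i : ℝ) + 1) < x ∧ x ≤ 1 / (i : ℝ))
  else decide (x ≤ 1 / (K : ℝ))

/-- Harmonic-K packs the subsequence of each class with Next Fit; its cost is the
sum of the Next Fit costs over the classes. -/
noncomputable def haCost (K : ℕ) (l : List ℝ) : ℕ :=
  ∑ i ∈ Finset.Icc 1 K, nfCost (l.filter (haMem K i))

/-- The index (from 1 to K) of the class of Harmonic Match with parameter `K` that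
an item of size `x ∈ (0,1]` belongs to.  Class `i < K` is
`(1/(i+2), 1/(i+1)] ∪ (i/(i+1), (i+1)/(i+2)]` and class `K` is
`(0, 1/(K+1)] ∪ (K/(K+1), 1]`. -/
noncomputable def hmClassIdx (K : ℕ) (x : ℝ) : ℕ :=
  if x ≤ 1 / 2 then min K (⌊1 / x⌋.toNat - 1) else min K (⌈1 / (1 - x)⌉.toNat - 2)

/-- The state of Harmonic Match: the levels of the mature bins, and for each class
the large items still waiting for a companion and the level of the current Next-Fit
bin of small items of that class (initialized to `2`, so that the first such item
opens a bin), together with the number of bins opened so far. -/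
structure HMState where
  mature : List ℝ
  larges : ℕ → List ℝ
  lvl : ℕ → ℝ
  bins : ℕ

/-- One step of Harmonic Match with parameter `K`.  A large item opens a new bin in
its class.  A small item is first tried in the mature bins via Best Fit; otherwise
it is matched via Best Fit with the largest companion large item of its class (that
bin then becomes mature); otherwise it is packed by Next Fit with the other
unmatched small items of its class (a full Next-Fit bin becomes mature). -/
noncomputable def hmStep (K : ℕ) (s : HMState) (x : ℝ) : HMState :=
  let c := hmClassIdx K x
  if 1 / 2 < x then
    { s with larges := Function.update s.larges c (x :: s.larges c), bins := s.bins + 1 }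
  else
    match (s.mature.filter (fun m => decide (m + x ≤ 1))).max? with
    | some m => { s with mature := (m + x) :: s.mature.erase m }
    | none =>
      match ((s.larges c).filter (fun y => decide (y + x ≤ 1))).max? with
      | some y =>
          { s with larges := Function.update s.larges c ((s.larges c).erase y),
                   mature := (y + x) :: s.mature }
      | none =>
          if s.lvl c + x ≤ 1 then
            { s with lvl := Function.update s.lvl c (s.lvl c + x) }
          else
            { s with lvl := Function.update s.lvl c x,
                     mature := s.lvl c :: s.mature,
                     bins := s.bins + 1 }

/-- The number of bins Harmonic Match with parameter `K` uses on the sequence `l`. -/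
noncomputable def hmCost (K : ℕ) (l : List ℝ) : ℕ :=
  (l.foldl (hmStep K) ⟨[], fun _ => [], fun _ => 2, 0⟩).bins

/-!
Harmonic Match opens one bin per large item, which is exactly what class `1 = (1/2, 1]` of
Harmonic with `K + 1` classes costs. A small item of Harmonic Match class `c` either joins an
existing bin at no cost or is packed by Next Fit among small items of class `c`, and these form a
subsequence of class `c + 1` of Harmonic. Next Fit is monotone for the lexicographic order on its
state (bins opened, current level), and skipping an item only moves the state down, so in every
class the Next-Fit state of Harmonic Match stays lexicographically below that of Harmonic.
-/

open Finset

section NextFit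

lemma nfStep_fst (s : ℕ × ℝ) (x : ℝ) :
    (nfStep s x).1 = s.1 + if s.2 + x ≤ 1 then 0 else 1 := by
  unfold nfStep; split_ifs <;> rfl

lemma nfStep_snd_nonneg {s : ℕ × ℝ} {x : ℝ} (hs : 0 ≤ s.2) (hx : 0 ≤ x) :
    0 ≤ (nfStep s x).2 := by
  unfold nfStep; split_ifs <;> dsimp only <;> linarith

lemma foldl_nfStep_snd_nonneg {l : List ℝ} {s : ℕ × ℝ} (hs : 0 ≤ s.2) (hl : ∀ x ∈ l, 0 ≤ x) :
    0 ≤ (l.foldl nfStep s).2 := by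
  induction l generalizing s with
  | nil => exact hs
  | cons x l ih =>
    exact ih (nfStep_snd_nonneg hs (hl x List.mem_cons_self))
      fun y hy => hl y (List.mem_cons_of_mem x hy)

lemma toLex_le_nfStep (s : ℕ × ℝ) {x : ℝ} (hx : 0 ≤ x) : toLex s ≤ toLex (nfStep s x) := by
  unfold nfStep
  split_ifs
  · exact Prod.Lex.toLex_le_toLex.2 (Or.inr ⟨rfl, by dsimp only; linarith⟩)
  · exact Prod.Lex.toLex_le_toLex.2 (Or.inl (Nat.lt_succ_self _))

lemma nfStep_mono {a b : ℕ × ℝ} {x : ℝ} (hb : 0 ≤ b.2) (hab : toLex a ≤ toLex b) :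
    toLex (nfStep a x) ≤ toLex (nfStep b x) := by
  rw [Prod.Lex.toLex_le_toLex] at hab ⊢
  unfold nfStep
  split_ifs with ha hb' <;> dsimp only
  · exact hab.imp_right fun h => ⟨h.1, by linarith⟩
  · exact Or.inl (by omega)
  · rcases hab with h | h
    · rcases (Nat.succ_le_of_lt h).lt_or_eq with h' | h'
      · exact Or.inl h'
      · exact Or.inr ⟨h', by linarith⟩
    · exact absurd (h.2.trans_lt (by linarith)) (by linarith)
  · exact hab.imp (by omega) fun h => ⟨by omega, le_rfl⟩

lemma foldl_nfStep_fst_of_half_lt {l : List ℝ} {s : ℕ × ℝ} (hl : ∀ x ∈ l, 1 / 2 < x)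
    (hs : 1 / 2 < s.2) : (l.foldl nfStep s).1 = s.1 + l.length := by
  induction l generalizing s with
  | nil => rfl
  | cons x l ih =>
    have hx := hl x List.mem_cons_self
    have hstep : nfStep s x = (s.1 + 1, x) := if_neg (by linarith)
    rw [List.foldl_cons, hstep, ih (fun y hy => hl y (List.mem_cons_of_mem x hy)) hx,
      List.length_cons]
    ring

lemma nfCost_eq_length {l : List ℝ} (hl : ∀ x ∈ l, 1 / 2 < x) : nfCost l = l.length := by
  rw [nfCost, foldl_nfStep_fst_of_half_lt hl (by norm_num), zero_add]

end NextFit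

section Classes

lemma haMem_iff_floor_eq {K i : ℕ} (hi : 0 < i) (hiK : i < K) {x : ℝ} (hx : 0 < x) :
    haMem K i x = true ↔ ⌊1 / x⌋ = i := by
  have hi' : (0 : ℝ) < i := by exact_mod_cast hi
  rw [haMem, if_pos hiK, decide_eq_true_iff, Int.floor_eq_iff, one_div_lt (by positivity) hx,
    le_one_div hx hi']
  push_cast
  tauto

lemma haMem_self_iff_le_floor {K : ℕ} (hK : 0 < K) {x : ℝ} (hx : 0 < x) :
    haMem K K x = true ↔ (K : ℤ) ≤ ⌊1 / x⌋ := by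
  rw [haMem, if_neg (lt_irrefl K), decide_eq_true_iff, Int.le_floor,
    le_one_div hx (by exact_mod_cast hK)]
  push_cast
  rfl

lemma one_le_floor_one_div {x : ℝ} (hx0 : 0 < x) (hx1 : x ≤ 1) : 1 ≤ ⌊1 / x⌋ :=
  Int.le_floor.2 (by push_cast; rw [le_div_iff₀ hx0]; linarith)

lemma two_le_floor_one_div_iff {x : ℝ} (hx : 0 < x) : 2 ≤ ⌊1 / x⌋ ↔ x ≤ 1 / 2 := by
  rw [Int.le_floor, le_one_div hx two_pos]
  push_cast
  rfl

lemma haMem_one_iff {K : ℕ} (hK : 1 ≤ K) {x : ℝ} (hx0 : 0 < x) (hx1 : x ≤ 1) :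
    haMem (K + 1) 1 x = true ↔ 1 / 2 < x := by
  rw [haMem_iff_floor_eq one_pos (by omega) hx0, ← not_le, ← two_le_floor_one_div_iff hx0]
  have := one_le_floor_one_div hx0 hx1
  push_cast
  omega

lemma haMem_succ_iff {K c : ℕ} (hc1 : 1 ≤ c) (hcK : c ≤ K) {x : ℝ} (hx0 : 0 < x) (hx1 : x ≤ 1) :
    haMem (K + 1) (c + 1) x = true ↔ x ≤ 1 / 2 ∧ hmClassIdx K x = c := by
  have h1 := one_le_floor_one_div hx0 hx1
  have h2 := two_le_floor_one_div_iff hx0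
  have hmem : haMem (K + 1) (c + 1) x = true ↔
      if c < K then ⌊1 / x⌋ = c + 1 else (K : ℤ) + 1 ≤ ⌊1 / x⌋ := by
    split_ifs with h
    · rw [haMem_iff_floor_eq (by omega) (by omega) hx0]; push_cast; rfl
    · obtain rfl : c = K := by omega
      rw [haMem_self_iff_le_floor (by omega) hx0]; push_cast; rfl
  rw [hmem, hmClassIdx]
  by_cases hx2 : x ≤ 1 / 2
  · have := h2.2 hx2
    simp only [hx2, if_true, true_and]
    split_ifs <;> omega
  · have := mt h2.1 hx2
    simp only [hx2, false_and, iff_false]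
    split_ifs <;> omega

lemma hmClassIdx_mem_Icc {K : ℕ} (hK : 1 ≤ K) {x : ℝ} (hx0 : 0 < x) (hx : x ≤ 1 / 2) :
    hmClassIdx K x ∈ Icc 1 K := by
  have := (two_le_floor_one_div_iff hx0).2 hx
  rw [hmClassIdx, if_pos hx, mem_Icc]
  omega

end Classes

section Simulation

variable {K : ℕ} {s : HMState} {x : ℝ}

lemma hmStep_of_half_lt (hx : 1 / 2 < x) :
    (hmStep K s x).lvl = s.lvl ∧ (hmStep K s x).bins = s.bins + 1 := by
  simp only [hmStep, if_pos hx, and_self]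

lemma hmStep_of_le_half (hx : x ≤ 1 / 2) :
    ((hmStep K s x).lvl = s.lvl ∧ (hmStep K s x).bins = s.bins) ∨
    ((hmStep K s x).lvl = Function.update s.lvl (hmClassIdx K x)
        (nfStep (s.bins, s.lvl (hmClassIdx K x)) x).2 ∧
      (hmStep K s x).bins = (nfStep (s.bins, s.lvl (hmClassIdx K x)) x).1) := by
  simp only [hmStep, if_neg (not_lt.2 hx)]
  split
  · exact Or.inl ⟨rfl, rfl⟩
  split
  · exact Or.inl ⟨rfl, rfl⟩
  split_ifs with hfit <;> simp [nfStep, hfit]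

/-- `b c` counts the Next-Fit bins Harmonic Match has opened for the small items of class `c`;
`HMState` does not record it. -/
def HMDominated (K : ℕ) (s : HMState) (n : ℕ) (g : ℕ → ℕ × ℝ) : Prop :=
  ∃ b : ℕ → ℕ, s.bins = n + ∑ c ∈ Icc 1 K, b c ∧
    ∀ c ∈ Icc 1 K, toLex (b c, s.lvl c) ≤ toLex (g c)

namespace HMDominated

variable {n : ℕ} {g : ℕ → ℕ × ℝ}

lemma bins_le (h : HMDominated K s n g) : s.bins ≤ n + ∑ c ∈ Icc 1 K, (g c).1 := by
  obtain ⟨b, hbins, hb⟩ := h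
  rw [hbins]
  gcongr with c hc
  exact (Prod.Lex.toLex_le_toLex'.1 (hb c hc)).1

lemma congr {g' : ℕ → ℕ × ℝ} (h : HMDominated K s n g) (hg : ∀ c ∈ Icc 1 K, g c = g' c) :
    HMDominated K s n g' := by
  obtain ⟨b, hbins, hb⟩ := h
  exact ⟨b, hbins, fun c hc => hg c hc ▸ hb c hc⟩

lemma hmStep_of_half_lt (h : HMDominated K s n g) (hx : 1 / 2 < x) :
    HMDominated K (hmStep K s x) (n + 1) g := by
  obtain ⟨hlvl, hbins⟩ := _root_.hmStep_of_half_lt (K := K) (s := s) hx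
  obtain ⟨b, hb, hdom⟩ := h
  exact ⟨b, by rw [hbins, hb]; ring, hlvl ▸ hdom⟩

lemma hmStep_of_le_half (h : HMDominated K s n g) (hg : ∀ c ∈ Icc 1 K, 0 ≤ (g c).2)
    (hx0 : 0 ≤ x) (hx : x ≤ 1 / 2) (hc : hmClassIdx K x ∈ Icc 1 K) :
    HMDominated K (hmStep K s x) n
      (Function.update g (hmClassIdx K x) (nfStep (g (hmClassIdx K x)) x)) := by
  have hstep := _root_.hmStep_of_le_half (K := K) (s := s) hx
  generalize hmClassIdx K x = c₀ at hstep hc ⊢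
  obtain ⟨b, hbins, hdom⟩ := h
  rcases hstep with ⟨hlvl, hb⟩ | ⟨hlvl, hb⟩
  · refine ⟨b, hb ▸ hbins, fun c hc => ?_⟩
    rw [hlvl]
    rcases eq_or_ne c c₀ with rfl | hne
    · rw [Function.update_self]
      exact (hdom _ hc).trans (toLex_le_nfStep _ hx0)
    · rw [Function.update_of_ne hne]
      exact hdom c hc
  · refine ⟨Function.update b c₀ (nfStep (b c₀, s.lvl c₀) x).1, ?_, fun c hc => ?_⟩
    · rw [hb, nfStep_fst, nfStep_fst, sum_update_of_mem hc, hbins,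
        ← add_sum_erase _ _ hc, sdiff_singleton_eq_erase]
      dsimp only
      ring
    · rw [hlvl]
      rcases eq_or_ne c c₀ with rfl | hne
      · have hsnd : (nfStep (s.bins, s.lvl c) x).2 = (nfStep (b c, s.lvl c) x).2 := by
          unfold nfStep; split_ifs <;> rfl
        simp only [Function.update_self, hsnd]
        exact nfStep_mono (hg _ hc) (hdom _ hc)
      · simp only [Function.update_of_ne hne]
        exact hdom c hc

end HMDominated

lemma hmDominated_foldl (hK : 1 ≤ K) {l : List ℝ} (hl : ∀ y ∈ l, 0 < y ∧ y ≤ 1) :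
    HMDominated K (l.foldl (hmStep K) ⟨[], fun _ => [], fun _ => 2, 0⟩)
      (l.filter fun y => decide (1 / 2 < y)).length
      (fun c => (l.filter (haMem (K + 1) (c + 1))).foldl nfStep (0, 2)) := by
  induction l using List.reverseRecOn with
  | nil => exact ⟨fun _ => 0, by simp, fun c _ => le_rfl⟩
  | append_singleton l x ih =>
    have hl' : ∀ y ∈ l, 0 < y ∧ y ≤ 1 := fun y hy => hl y (List.mem_append_left _ hy)
    obtain ⟨hx0, hx1⟩ := hl x (by simp)
    simp only [List.filter_append, List.foldl_append, List.length_append, List.filter_cons,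
      List.filter_nil, List.foldl_cons, List.foldl_nil]
    by_cases hx : 1 / 2 < x
    · simp only [hx, decide_true, if_true, List.length_singleton]
      refine ((ih hl').hmStep_of_half_lt hx).congr fun c hc => ?_
      obtain ⟨hc1, hcK⟩ := mem_Icc.1 hc
      rw [if_neg fun hmem => by linarith [((haMem_succ_iff hc1 hcK hx0 hx1).1 hmem).1]]
      rfl
    · have hx2 : x ≤ 1 / 2 := not_lt.1 hx
      have hg : ∀ c ∈ Icc 1 K, 0 ≤ ((l.filter (haMem (K + 1) (c + 1))).foldl nfStep (0, 2)).2 :=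
        fun c _ => foldl_nfStep_snd_nonneg (by norm_num)
          fun y hy => (hl' y (List.mem_filter.1 hy).1).1.le
      simp only [hx, decide_false, Bool.false_eq_true, if_false, List.length_nil, add_zero]
      refine ((ih hl').hmStep_of_le_half hg hx0.le hx2 (hmClassIdx_mem_Icc hK hx0 hx2)).congr
        fun c hc => ?_
      obtain ⟨hc1, hcK⟩ := mem_Icc.1 hc
      rcases eq_or_ne c (hmClassIdx K x) with rfl | hne
      · rw [Function.update_self, if_pos ((haMem_succ_iff hc1 hcK hx0 hx1).2 ⟨hx2, rfl⟩)]
        rfl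
      · rw [Function.update_of_ne hne,
          if_neg fun hmem => hne ((haMem_succ_iff hc1 hcK hx0 hx1).1 hmem).2.symm]
        rfl

end Simulation

lemma haCost_succ (K : ℕ) (l : List ℝ) :
    haCost (K + 1) l = nfCost (l.filter (haMem (K + 1) 1)) +
      ∑ c ∈ Icc 1 K, nfCost (l.filter (haMem (K + 1) (c + 1))) := by
  rw [haCost, Icc_eq_cons_Ioc (by omega), sum_cons, ← Icc_add_one_left_eq_Ioc,
    ← map_add_right_Icc, sum_map]
  rfl

lemma nfCost_filter_haMem_one {K : ℕ} (hK : 1 ≤ K) {l : List ℝ} (hl : ∀ y ∈ l, 0 < y ∧ y ≤ 1) :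
    nfCost (l.filter (haMem (K + 1) 1)) = (l.filter fun y => decide (1 / 2 < y)).length := by
  have hfilter : l.filter (haMem (K + 1) 1) = l.filter fun y => decide (1 / 2 < y) :=
    List.filter_congr fun y hy => by
      rw [Bool.eq_iff_iff, haMem_one_iff hK (hl y hy).1 (hl y hy).2, decide_eq_true_iff]
  rw [hfilter]
  exact nfCost_eq_length fun y hy => by simpa using (List.mem_filter.1 hy).2

/-- For every sequence of items in (0,1], the cost of Harmonic Match with parameter
`K` is at most the cost of Harmonic with parameter `K+1`. -/
theorem hm_le_ha (K : ℕ) (hK : 1 ≤ K) (l : List ℝ)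
    (h : ∀ y ∈ l, 0 < y ∧ y ≤ 1) :
    hmCost K l ≤ haCost (K + 1) l := by
  rw [haCost_succ, nfCost_filter_haMem_one hK h]
  exact (hmDominated_foldl hK h).bins_le
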